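/- The map f is injective: if A₁ = (-(1/2)Σ_w + S₁)Σ₁⁻¹ and A₂ = (-(1/2)Σ_w + S₂)Σ₂⁻¹ with Σᵢ symmetric positive definite and Sᵢ skew-symmetric, and A₁ = A₂, then Σ₁ = Σ₂ and S₁ = S₂. -/

import Mathlib

/-!
If `Aᵢ = (-½ Σ_w + Sᵢ) Σᵢ⁻¹`, then `Aᵢ Σᵢ = -½ Σ_w + Sᵢ`, and adding the transpose kills the
skew part: `Σᵢ` solves the Lyapunov equation `A Σ + Σ Aᵀ = -Σ_w` for `A = A₁ = A₂`. Pairing this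
equation with a left eigenvector of `A` shows that `A` is Hurwitz, so `A` and `-Aᵀ` have disjoint
spectra and, by Sylvester's theorem, the Lyapunov equation has at most one solution. Hence
`Σ₁ = Σ₂`, and then `S₁ = Aᵢ Σᵢ + ½ Σ_w = S₂`.
-/

open Matrix Polynomial

/-- A real matrix is Hurwitz stable if all its (complex) eigenvalues have
strictly negative real part. -/
def IsHurwitz {n : ℕ} (A : Matrix (Fin n) (Fin n) ℝ) : Prop :=
  ∀ μ ∈ spectrum ℂ (A.map (Complex.ofReal)), μ.re < 0

theorem SemiconjBy.aeval {R A : Type*} [CommSemiring R] [Semiring A] [Algebra R A] {a x y : A}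
    (h : SemiconjBy a x y) (p : R[X]) : SemiconjBy a (aeval x p) (aeval y p) := by
  induction p using Polynomial.induction_on' with
  | add p q hp hq => simpa only [map_add] using hp.add_right hq
  | monomial k r =>
    simpa only [aeval_monomial] using
      SemiconjBy.mul_right (Algebra.commutes r a).symm (h.pow_right k)

namespace Matrix

section Field

variable {ι K : Type*} [Fintype ι] [Field K]

theorem spectrum_transpose [DecidableEq ι] (A : Matrix ι ι K) : spectrum K Aᵀ = spectrum K A := by
  ext μ
  simp only [mem_spectrum_iff_isRoot_charpoly, charpoly_transpose]

theorem exists_mulVec_eq_smul_of_mem_spectrum [DecidableEq ι] {A : Matrix ι ι K} {μ : K}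
    (h : μ ∈ spectrum K A) : ∃ v ≠ 0, A *ᵥ v = μ • v := by
  rw [← spectrum_toLin', ← Module.End.hasEigenvalue_iff_mem_spectrum] at h
  obtain ⟨v, hv, hv0⟩ := h.exists_hasEigenvector
  exact ⟨v, hv0, by simpa using Module.End.mem_eigenspace_iff.mp hv⟩

/-- `X χ_A(B) = χ_A(A) X = 0`, and `χ_A(B)` is invertible by the spectral mapping theorem. -/
theorem eq_zero_of_semiconjBy_of_disjoint_spectrum [DecidableEq ι] [IsAlgClosed K]
    {A B X : Matrix ι ι K} (hX : SemiconjBy X B A) (h : Disjoint (spectrum K A) (spectrum K B)) :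
    X = 0 := by
  cases isEmpty_or_nonempty ι
  · exact Subsingleton.elim _ _
  have hunit : IsUnit (aeval B A.charpoly) := by
    by_contra hB
    have h0 := spectrum.zero_mem K hB
    rw [spectrum.map_polynomial_aeval_of_degree_pos B _ (by
      rw [charpoly_degree_eq_dim]; exact_mod_cast Fintype.card_pos)] at h0
    obtain ⟨μ, hμB, hμ⟩ := h0
    exact h.ne_of_mem (mem_spectrum_iff_isRoot_charpoly.mpr hμ) hμB rfl
  rw [← hunit.mul_left_eq_zero, (hX.aeval _).eq, aeval_self_charpoly, zero_mul]

theorem mul_add_mul_transpose_eq_neg_of_mul_eq [CharZero K] {A Sig W S : Matrix ι ι K}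
    (hSig : Sigᵀ = Sig) (hW : Wᵀ = W) (hS : Sᵀ = -S) (h : A * Sig = (-(1/2 : K)) • W + S) :
    A * Sig + Sig * Aᵀ = -W := by
  have hT : Sig * Aᵀ = (-(1/2 : K)) • W - S := by
    rw [← hSig, ← transpose_mul, h, transpose_add, transpose_smul, hW, hS, sub_eq_add_neg]
  rw [h, hT]
  module

end Field

section Complexification

variable {ι : Type*} [Fintype ι]

theorem map_ofReal_mul (M N : Matrix ι ι ℝ) :
    (M * N).map Complex.ofReal = M.map Complex.ofReal * N.map Complex.ofReal :=
  Matrix.map_mul (f := Complex.ofRealHom)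

theorem det_map_ofReal [DecidableEq ι] (M : Matrix ι ι ℝ) :
    (M.map Complex.ofReal).det = M.det :=
  (Complex.ofRealHom.map_det M).symm

open scoped MatrixOrder ComplexOrder in
theorem PosDef.map_ofReal [DecidableEq ι] {M : Matrix ι ι ℝ} (hM : M.PosDef) :
    (M.map Complex.ofReal).PosDef := by
  have hdet : (M.map Complex.ofReal).det ≠ 0 := by
    rw [det_map_ofReal]
    exact_mod_cast hM.det_pos.ne'
  obtain ⟨B, rfl⟩ := CStarAlgebra.nonneg_iff_eq_star_mul_self.mp hM.posSemidef.nonneg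
  rw [map_ofReal_mul, star_eq_conjTranspose, conjTranspose_map _ (fun _ => by simp)] at hdet ⊢
  exact (posSemidef_conjTranspose_mul_self _).posDef_iff_det_ne_zero.mpr hdet

end Complexification

end Matrix

section Hurwitz

variable {n : ℕ}

open scoped ComplexOrder in
/-- For a left eigenvector `vᵀ A = μ vᵀ`, pairing the Lyapunov equation with `v` and `v̄` gives
`2 Re μ · vᵀ Σ v̄ = -vᵀ W v̄`. -/
theorem isHurwitz_of_lyapunov {A Sig W : Matrix (Fin n) (Fin n) ℝ} (hSig : Sig.PosDef)
    (hW : W.PosDef) (h : A * Sig + Sig * Aᵀ = -W) : IsHurwitz A := by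
  intro μ hμ
  set Ac := A.map Complex.ofReal
  set Sc := Sig.map Complex.ofReal
  rw [← spectrum_transpose] at hμ
  obtain ⟨v, hv0, hv⟩ := exists_mulVec_eq_smul_of_mem_spectrum hμ
  have hleft : v ᵥ* Ac = μ • v := by rwa [← mulVec_transpose]
  have hright : Acᵀ *ᵥ star v = star μ • star v := by
    rw [← star_smul, ← hleft, star_vecMul, ← conjTranspose_map _ (fun _ => by simp),
      conjTranspose_eq_transpose_of_trivial, transpose_map]
  have hlyap : Ac * Sc + Sc * Acᵀ = -W.map Complex.ofReal := by
    simpa only [Matrix.map_add _ Complex.ofReal_add, Matrix.map_neg _ Complex.ofReal_neg,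
      map_ofReal_mul, transpose_map] using congrArg (Matrix.map · Complex.ofReal) h
  have key : (μ + star μ) * (v ⬝ᵥ Sc *ᵥ star v) = -(v ⬝ᵥ W.map Complex.ofReal *ᵥ star v) := by
    rw [← dotProduct_neg, ← neg_mulVec, ← hlyap, add_mulVec, dotProduct_add, ← mulVec_mulVec,
      ← mulVec_mulVec, hright, dotProduct_mulVec v Ac, hleft]
    simp [add_mul, mulVec_smul]
  have hpos {M : Matrix (Fin n) (Fin n) ℝ} (hM : M.PosDef) :
      0 < (v ⬝ᵥ M.map Complex.ofReal *ᵥ star v).re := by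
    simpa using (Complex.pos_iff.mp (hM.map_ofReal.dotProduct_mulVec_pos (star_ne_zero.mpr hv0))).1
  have hre := congrArg Complex.re key
  rw [Complex.star_def, Complex.add_conj, Complex.re_ofReal_mul, Complex.neg_re] at hre
  nlinarith [hpos hSig, hpos hW]

theorem IsHurwitz.lyapunov_unique {A X Y C : Matrix (Fin n) (Fin n) ℝ} (hA : IsHurwitz A)
    (hX : A * X + X * Aᵀ = C) (hY : A * Y + Y * Aᵀ = C) : X = Y := by
  have hsemi : SemiconjBy (X - Y) (-Aᵀ) A := by
    rw [SemiconjBy, mul_neg, mul_sub, sub_mul, neg_sub, sub_eq_sub_iff_add_eq_add, add_comm]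
    exact (hX.trans hY.symm).symm
  have hdisj :
      Disjoint (spectrum ℂ (A.map Complex.ofReal)) (spectrum ℂ ((-Aᵀ).map Complex.ofReal)) := by
    rw [Matrix.map_neg _ Complex.ofReal_neg, transpose_map, ← spectrum.neg_eq, spectrum_transpose,
      Set.disjoint_left]
    intro μ hμ hμ'
    have hneg := hA _ (Set.mem_neg.mp hμ')
    rw [Complex.neg_re] at hneg
    linarith [hA μ hμ]
  have hzero := eq_zero_of_semiconjBy_of_disjoint_spectrum
    (hsemi.map Complex.ofRealHom.mapMatrix) hdisj
  exact sub_eq_zero.mp <| Matrix.map_injective Complex.ofReal_injective <|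
    hzero.trans (Matrix.map_zero _ Complex.ofReal_zero).symm

end Hurwitz

theorem stmt3 {n : ℕ} (Sw Sig1 Sig2 S1 S2 : Matrix (Fin n) (Fin n) ℝ)
    (hSw : Sw.PosDef) (hSig1 : Sig1.PosDef) (hSig2 : Sig2.PosDef)
    (hS1 : S1ᵀ = -S1) (hS2 : S2ᵀ = -S2)
    (hEq : ((-(1/2 : ℝ)) • Sw + S1) * Sig1⁻¹ = ((-(1/2 : ℝ)) • Sw + S2) * Sig2⁻¹) :
    Sig1 = Sig2 ∧ S1 = S2 := by
  set A := ((-(1/2 : ℝ)) • Sw + S1) * Sig1⁻¹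
  have hA1 : A * Sig1 = (-(1/2 : ℝ)) • Sw + S1 :=
    nonsing_inv_mul_cancel_right _ _ ((isUnit_iff_isUnit_det _).mp hSig1.isUnit)
  have hA2 : A * Sig2 = (-(1/2 : ℝ)) • Sw + S2 := by
    rw [hEq]
    exact nonsing_inv_mul_cancel_right _ _ ((isUnit_iff_isUnit_det _).mp hSig2.isUnit)
  have hSymm {M : Matrix (Fin n) (Fin n) ℝ} (hM : M.PosDef) : Mᵀ = M :=
    (isHermitian_iff_isSymm.mp hM.1).eq
  have hL1 := mul_add_mul_transpose_eq_neg_of_mul_eq (hSymm hSig1) (hSymm hSw) hS1 hA1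
  have hL2 := mul_add_mul_transpose_eq_neg_of_mul_eq (hSymm hSig2) (hSymm hSw) hS2 hA2
  have hSig : Sig1 = Sig2 := (isHurwitz_of_lyapunov hSig1 hSw hL1).lyapunov_unique hL1 hL2
  exact ⟨hSig, add_left_cancel (hA1.symm.trans (hSig ▸ hA2))⟩
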